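/- arXiv:1910.00206 — 3 statements merged into one kernel-verified Lean document; each statement's English description precedes it below -/
import Mathlib

section
/- Let v_1, …, v_d be LDP fan data having at least one singular cone. Suppose that whenever d ≥ 4 and an index k satisfies v_k = v_{k−1} + v_{k+1}, the cyclic sequence of length d−1 obtained by deleting v_k fails to be LDP fan data (this is the condition that X(Δ) cannot be obtained by blowing up a toric log del Pezzo surface at a nonsingular torus-fixed point). If there is an index i with det(v_i, v_{i+1}) = det(v_{i+1}, v_{i+2}) = 1 (i.e., σ_i and σ_{i+1} are nonsingular), then det(v_j, v_{j+1}) ≥ 2 for every index j not congruent to i or i+1 modulo d (i.e., every other cone is singular). -/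
/-- The determinant `det(u, w) = u₁w₂ − u₂w₁` of two integer vectors. -/
def detZ (u w : ℤ × ℤ) : ℤ := u.1 * w.2 - u.2 * w.1

/-- The real vector associated to an integer vector. -/
noncomputable def toR2 (u : ℤ × ℤ) : ℝ × ℝ := ((u.1 : ℝ), (u.2 : ℝ))

/-- The cone `ℝ_{≥0} u + ℝ_{≥0} w` spanned by two integer vectors. -/
def coneOf (u w : ℤ × ℤ) : Set (ℝ × ℝ) :=
  {x | ∃ a b : ℝ, 0 ≤ a ∧ 0 ≤ b ∧ x = a • toR2 u + b • toR2 w}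

/-- Complete fan data of length `d`: a cyclic sequence of primitive integer vectors with
`det(v_i, v_{i+1}) ≥ 1` whose successive cones cover `ℝ²` and have pairwise disjoint
interiors. -/
def IsCompleteFanData (d : ℕ) (v : ZMod d → ℤ × ℤ) : Prop :=
  3 ≤ d ∧
  (∀ i, Int.gcd (v i).1 (v i).2 = 1) ∧
  (∀ i, 1 ≤ detZ (v i) (v (i + 1))) ∧
  (⋃ i, coneOf (v i) (v (i + 1))) = Set.univ ∧
  ∀ i j, i ≠ j →
    interior (coneOf (v i) (v (i + 1))) ∩ interior (coneOf (v j) (v (j + 1))) = ∅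

/-- `f(i) = det(v_{i−1}, v_i) + det(v_i, v_{i+1}) + det(v_{i+1}, v_{i−1})`. -/
def fanF (d : ℕ) (v : ZMod d → ℤ × ℤ) (i : ZMod d) : ℤ :=
  detZ (v (i - 1)) (v i) + detZ (v i) (v (i + 1)) + detZ (v (i + 1)) (v (i - 1))

/-- LDP fan data: complete fan data with `f(i) ≥ 1` for all `i`. -/
def IsLDPFanData (d : ℕ) (v : ZMod d → ℤ × ℤ) : Prop :=
  IsCompleteFanData d v ∧ ∀ i, 1 ≤ fanF d v i

/-- The number of singular cones, i.e. indices `i` with `det(v_i, v_{i+1}) ≥ 2`. -/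
noncomputable def numSingular (d : ℕ) (v : ZMod d → ℤ × ℤ) : ℕ :=
  {i : ZMod d | 2 ≤ detZ (v i) (v (i + 1))}.ncard

/-- Equivalence of fan data: some `GL(2, ℤ)` matrix maps the vector set of one
bijectively onto the vector set of the other. -/
def FanEquiv {d₁ d₂ : ℕ} (v : ZMod d₁ → ℤ × ℤ) (w : ZMod d₂ → ℤ × ℤ) : Prop :=
  ∃ M : Matrix (Fin 2) (Fin 2) ℤ, IsUnit M.det ∧
    (fun u : ℤ × ℤ => (M 0 0 * u.1 + M 0 1 * u.2, M 1 0 * u.1 + M 1 1 * u.2)) ''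
      Set.range v = Set.range w

/-- The cyclic sequence of length `d − 1` obtained by deleting the vector `v_k`:
it lists `v_{k+1}, v_{k+2}, …, v_{k+d−1}`. -/
def deleteAt {d : ℕ} (v : ZMod d → ℤ × ℤ) (k : ZMod d) : ZMod (d - 1) → ℤ × ℤ :=
  fun i => v (k + 1 + (i.val : ZMod d))

/-- The cyclic sequence of length `d + 1` obtained by inserting `v_k + v_{k+1}`
between `v_k` and `v_{k+1}`. -/
def insertAt {d : ℕ} (v : ZMod d → ℤ × ℤ) (k : ZMod d) : ZMod (d + 1) → ℤ × ℤ :=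
  fun i =>
    if i.val ≤ k.val then v ((i.val : ℕ) : ZMod d)
    else if i.val = k.val + 1 then v k + v (k + 1)
    else v ((i.val - 1 : ℕ) : ZMod d)

/-!
Deleting a vertex `v_k = v_{k-1} + v_{k+1}` from LDP fan data with `d ≥ 4` gives LDP fan data
again, so the hypothesis says that no `v_k` is the sum of its neighbours. Under this condition
convexity (`f ≥ 1`) shows that for a nonsingular cone `σ_j` the lattice point `v_{j+1} - v_j` lies in
the interior of `σ_{j+1}` and `v_j - v_{j+1}` in the interior of `σ_{j-1}`, and that two consecutive
nonsingular cones `σ_i`, `σ_{i+1}` satisfy `det(v_i, v_{i+2}) ≤ 0`, so that `σ_i ∪ σ_{i+1}` contains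
a half-plane. A nonsingular cone `σ_j` with `j ∉ {i - 1, i, i + 1, i + 2}` is then impossible, as one
of `±(v_{j+1} - v_j)` lies in that half-plane. For `j = i + 2` or `j = i - 1` there are three
consecutive nonsingular cones, which forces the nonsingular fan of `ℙ¹ × ℙ¹`.
-/

open Filter Topology

section Determinant

@[simp] lemma detZ_self (a : ℤ × ℤ) : detZ a a = 0 := by
  simp only [detZ]; ring

lemma detZ_swap (a b : ℤ × ℤ) : detZ b a = -detZ a b := by
  simp only [detZ]; ring

@[simp] lemma detZ_add_left (a b c : ℤ × ℤ) : detZ (a + b) c = detZ a c + detZ b c := by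
  simp only [detZ, Prod.fst_add, Prod.snd_add]; ring

@[simp] lemma detZ_add_right (a b c : ℤ × ℤ) : detZ a (b + c) = detZ a b + detZ a c := by
  simp only [detZ, Prod.fst_add, Prod.snd_add]; ring

@[simp] lemma detZ_sub_left (a b c : ℤ × ℤ) : detZ (a - b) c = detZ a c - detZ b c := by
  simp only [detZ, Prod.fst_sub, Prod.snd_sub]; ring

@[simp] lemma detZ_sub_right (a b c : ℤ × ℤ) : detZ a (b - c) = detZ a b - detZ a c := by
  simp only [detZ, Prod.fst_sub, Prod.snd_sub]; ring

@[simp] lemma detZ_neg_left (a b : ℤ × ℤ) : detZ (-a) b = -detZ a b := by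
  simp only [detZ, Prod.fst_neg, Prod.snd_neg]; ring

@[simp] lemma detZ_neg_right (a b : ℤ × ℤ) : detZ a (-b) = -detZ a b := by
  simp only [detZ, Prod.fst_neg, Prod.snd_neg]; ring

@[simp] lemma detZ_smul_left (t : ℤ) (a b : ℤ × ℤ) : detZ (t • a) b = t * detZ a b := by
  simp only [detZ, Prod.smul_fst, Prod.smul_snd, smul_eq_mul]; ring

@[simp] lemma detZ_smul_right (t : ℤ) (a b : ℤ × ℤ) : detZ a (t • b) = t * detZ a b := by
  simp only [detZ, Prod.smul_fst, Prod.smul_snd, smul_eq_mul]; ring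

lemma eq_detZ_smul_add_detZ_smul {a b : ℤ × ℤ} (hab : detZ a b = 1) (z : ℤ × ℤ) :
    z = detZ z b • a + detZ a z • b := by
  simp only [detZ] at hab ⊢
  ext
  · simp only [Prod.fst_add, Prod.smul_fst, smul_eq_mul]; linear_combination (-z.1) * hab
  · simp only [Prod.snd_add, Prod.smul_snd, smul_eq_mul]; linear_combination (-z.2) * hab

lemma detZ_plucker (a b c x : ℤ × ℤ) :
    detZ a b * detZ x c = detZ b c * detZ a x - detZ a c * detZ b x := by
  simp only [detZ]; ring

lemma eq_one_of_eq_smul_of_gcd_eq_one {t : ℤ} {z u : ℤ × ℤ} (h : u = t • z) (ht : 0 < t)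
    (hu : Int.gcd u.1 u.2 = 1) : t = 1 := by
  have hdvd : t ∣ (Int.gcd u.1 u.2 : ℤ) :=
    Int.dvd_coe_gcd ⟨z.1, by simp [h]⟩ ⟨z.2, by simp [h]⟩
  rw [hu, Nat.cast_one] at hdvd
  exact le_antisymm (Int.le_of_dvd one_pos hdvd) ht

lemma eq_of_detZ_eq_zero {u w z : ℤ × ℤ} (huw : detZ u w = 1) (hwz : detZ w z = 0)
    (huz : 0 < detZ u z) (hz : Int.gcd z.1 z.2 = 1) : z = w := by
  have hzw : z = detZ u z • w := by
    conv_lhs => rw [eq_detZ_smul_add_detZ_smul huw z]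
    rw [detZ_swap, hwz, neg_zero, zero_smul, zero_add]
  rw [eq_one_of_eq_smul_of_gcd_eq_one hzw huz hz, one_smul] at hzw
  exact hzw

end Determinant

section Cone

def detR (x y : ℝ × ℝ) : ℝ := x.1 * y.2 - x.2 * y.1

lemma detR_toR2 (u w : ℤ × ℤ) : detR (toR2 u) (toR2 w) = detZ u w := by
  simp [detR, detZ, toR2]

lemma toR2_add (u w : ℤ × ℤ) : toR2 (u + w) = toR2 u + toR2 w := by
  simp [toR2]

lemma mem_coneOf_of_detR_nonneg {u w : ℤ × ℤ} {y : ℝ × ℝ} (huw : 0 < detZ u w)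
    (h₁ : 0 ≤ detR y (toR2 w)) (h₂ : 0 ≤ detR (toR2 u) y) : y ∈ coneOf u w := by
  set D := detR (toR2 u) (toR2 w)
  have hD : 0 < D := by simp only [D, detR_toR2]; exact_mod_cast huw
  have hcramer : detR y (toR2 w) • toR2 u + detR (toR2 u) y • toR2 w = D • y := by
    ext <;> simp only [D, detR, Prod.fst_add, Prod.snd_add, Prod.smul_fst, Prod.smul_snd,
      smul_eq_mul] <;> ring
  refine ⟨detR y (toR2 w) / D, detR (toR2 u) y / D, div_nonneg h₁ hD.le, div_nonneg h₂ hD.le, ?_⟩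
  rw [div_eq_inv_mul, div_eq_inv_mul, ← smul_smul, ← smul_smul, ← smul_add, hcramer, smul_smul,
    inv_mul_cancel₀ hD.ne', one_smul]

lemma toR2_mem_coneOf {u w z : ℤ × ℤ} (huw : 0 < detZ u w) (h₁ : 0 ≤ detZ z w)
    (h₂ : 0 ≤ detZ u z) : toR2 z ∈ coneOf u w :=
  mem_coneOf_of_detR_nonneg huw (by rw [detR_toR2]; exact_mod_cast h₁)
    (by rw [detR_toR2]; exact_mod_cast h₂)

lemma mem_interior_coneOf_of_detR_pos {u w : ℤ × ℤ} {y : ℝ × ℝ} (huw : 0 < detZ u w)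
    (h₁ : 0 < detR y (toR2 w)) (h₂ : 0 < detR (toR2 u) y) : y ∈ interior (coneOf u w) := by
  have hopen : IsOpen {y : ℝ × ℝ | 0 < detR y (toR2 w) ∧ 0 < detR (toR2 u) y} :=
    (isOpen_lt continuous_const (show Continuous fun y => detR y (toR2 w) by
      unfold detR; fun_prop)).inter
      (isOpen_lt continuous_const (show Continuous fun y => detR (toR2 u) y by
        unfold detR; fun_prop))
  exact interior_maximal (fun y hy => mem_coneOf_of_detR_nonneg huw hy.1.le hy.2.le) hopen
    ⟨h₁, h₂⟩

lemma coneOf_add_right_subset (u w : ℤ × ℤ) : coneOf u (u + w) ⊆ coneOf u w := by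
  rintro x ⟨a, b, ha, hb, rfl⟩
  exact ⟨a + b, b, by linarith, hb, by rw [toR2_add]; module⟩

lemma coneOf_add_left_subset (u w : ℤ × ℤ) : coneOf (u + w) w ⊆ coneOf u w := by
  rintro x ⟨a, b, ha, hb, rfl⟩
  exact ⟨a, a + b, ha, by linarith, by rw [toR2_add]; module⟩

lemma coneOf_subset_union (u w : ℤ × ℤ) :
    coneOf u w ⊆ coneOf u (u + w) ∪ coneOf (u + w) w := by
  rintro x ⟨a, b, ha, hb, rfl⟩
  rcases le_total b a with hba | hab
  · exact Or.inl ⟨a - b, b, by linarith, hb, by rw [toR2_add]; module⟩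
  · exact Or.inr ⟨a, b - a, ha, by linarith, by rw [toR2_add]; module⟩

/-- `z` lies in the interior of `cone(u, w)` (when `det(u, w) > 0`). -/
def InOpenCone (u w z : ℤ × ℤ) : Prop := 0 < detZ u z ∧ 0 < detZ z w

lemma toR2_mem_coneOf_union {u₁ u₂ u₃ x : ℤ × ℤ} (h₁₂ : 0 < detZ u₁ u₂) (h₂₃ : 0 < detZ u₂ u₃)
    (h₁₃ : detZ u₁ u₃ ≤ 0) (hx : 0 ≤ detZ u₁ x ∨ 0 ≤ detZ x u₃) :
    toR2 x ∈ coneOf u₁ u₂ ∨ toR2 x ∈ coneOf u₂ u₃ := by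
  have hP := detZ_plucker u₁ u₂ u₃ x
  have h₂x := detZ_swap u₂ x
  rcases hx with hx | hx
  · rcases le_total 0 (detZ x u₂) with hx₂ | hx₂
    · exact Or.inl (toR2_mem_coneOf h₁₂ hx₂ hx)
    · refine Or.inr (toR2_mem_coneOf h₂₃ ?_ (by linarith))
      nlinarith [mul_nonneg h₂₃.le hx, mul_nonneg (neg_nonneg.mpr h₁₃) (neg_nonneg.mpr hx₂)]
  · rcases le_total 0 (detZ u₂ x) with hx₂ | hx₂
    · exact Or.inr (toR2_mem_coneOf h₂₃ hx hx₂)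
    · refine Or.inl (toR2_mem_coneOf h₁₂ (by linarith) ?_)
      nlinarith [mul_nonneg h₁₂.le hx, mul_nonneg (neg_nonneg.mpr h₁₃) (neg_nonneg.mpr hx₂)]

end Cone

section ZMod

lemma ZMod.val_neg_one_of_neZero {n : ℕ} [NeZero n] : (-1 : ZMod n).val = n - 1 := by
  obtain ⟨m, rfl⟩ : ∃ m, n = m + 1 := ⟨n - 1, by have := NeZero.ne n; omega⟩
  exact ZMod.val_neg_one m

lemma ZMod.natCast_ne_zero_of_lt {d n : ℕ} (h₀ : 0 < n) (h : n < d) : (n : ZMod d) ≠ 0 := by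
  rw [Ne, ZMod.natCast_eq_zero_iff]
  exact Nat.not_dvd_of_pos_of_lt h₀ h

lemma ZMod.eq_or_eq_add_of_four_eq_zero {d : ℕ} (h : (4 : ZMod d) = 0) (s k : ZMod d) :
    s = k ∨ s = k + 1 ∨ s = k + 2 ∨ s = k + 3 := by
  have hdvd : d ∣ 4 := (ZMod.natCast_eq_zero_iff 4 d).mp (by exact_mod_cast h)
  have := Nat.le_of_dvd four_pos hdvd
  interval_cases d <;> first | (revert s k; decide) | norm_num at hdvd

end ZMod

namespace IsCompleteFanData

variable {d : ℕ} {v : ZMod d → ℤ × ℤ}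

lemma gcd_eq_one (hv : IsCompleteFanData d v) (i : ZMod d) : Int.gcd (v i).1 (v i).2 = 1 :=
  hv.2.1 i

lemma one_le_detZ (hv : IsCompleteFanData d v) (i : ZMod d) : 1 ≤ detZ (v i) (v (i + 1)) :=
  hv.2.2.1 i

lemma iUnion_coneOf (hv : IsCompleteFanData d v) :
    (⋃ i, coneOf (v i) (v (i + 1))) = Set.univ :=
  hv.2.2.2.1

lemma disjoint_interior (hv : IsCompleteFanData d v) {a b : ZMod d} (hab : a ≠ b) :
    interior (coneOf (v a) (v (a + 1))) ∩ interior (coneOf (v b) (v (b + 1))) = ∅ :=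
  hv.2.2.2.2 a b hab

/-- Pushing `x` slightly into the interior of `σ_b` contradicts the disjointness of interiors. -/
lemma eq_of_mem_interior_coneOf (hv : IsCompleteFanData d v) {a b : ZMod d} {x : ℝ × ℝ}
    (hxa : x ∈ interior (coneOf (v a) (v (a + 1)))) (hxb : x ∈ coneOf (v b) (v (b + 1))) :
    a = b := by
  by_contra hab
  obtain ⟨s, t, hs, ht, rfl⟩ := hxb
  set B := toR2 (v b)
  set B' := toR2 (v (b + 1))
  have hlim : Tendsto (fun ε : ℝ => s • B + t • B' + ε • (B + B')) (𝓝[>] 0)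
      (𝓝 (s • B + t • B')) := by
    have hcont : Continuous fun ε : ℝ => s • B + t • B' + ε • (B + B') := by fun_prop
    simpa using (hcont.tendsto 0).mono_left nhdsWithin_le_nhds
  obtain ⟨ε, hεa, hε⟩ :=
    ((hlim.eventually (isOpen_interior.mem_nhds hxa)).and self_mem_nhdsWithin).exists
  have hBB' : 0 < detR B B' := by
    simp only [B, B', detR_toR2]; exact_mod_cast hv.one_le_detZ b
  have hεb : s • B + t • B' + ε • (B + B') ∈ interior (coneOf (v b) (v (b + 1))) := by
    have hε : (0 : ℝ) < ε := hε
    apply mem_interior_coneOf_of_detR_pos (by linarith [hv.one_le_detZ b])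
    · have : detR (s • B + t • B' + ε • (B + B')) B' = (s + ε) * detR B B' := by
        simp only [detR, Prod.fst_add, Prod.snd_add, Prod.smul_fst, Prod.smul_snd, smul_eq_mul]
        ring
      rw [this]; positivity
    · have : detR B (s • B + t • B' + ε • (B + B')) = (t + ε) * detR B B' := by
        simp only [detR, Prod.fst_add, Prod.snd_add, Prod.smul_fst, Prod.smul_snd, smul_eq_mul]
        ring
      rw [this]; positivity
  exact (Set.eq_empty_iff_forall_notMem.mp (hv.disjoint_interior hab)) _ ⟨hεa, hεb⟩

lemma eq_of_inOpenCone_of_mem_coneOf (hv : IsCompleteFanData d v) {a b : ZMod d} {z : ℤ × ℤ}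
    (hz : InOpenCone (v a) (v (a + 1)) z) (hz' : toR2 z ∈ coneOf (v b) (v (b + 1))) : a = b :=
  hv.eq_of_mem_interior_coneOf (mem_interior_coneOf_of_detR_pos (by linarith [hv.one_le_detZ a])
    (by rw [detR_toR2]; exact_mod_cast hz.2) (by rw [detR_toR2]; exact_mod_cast hz.1)) hz'

/-- `det(v_i, v_{i+2}) ≤ 0` makes `σ_i ∪ σ_{i+1}` contain the half-planes `det(v_i, ·) ≥ 0` and
`det(·, v_{i+2}) ≥ 0`, which therefore miss the interiors of all other cones. -/
lemma detZ_neg_of_inOpenCone (hv : IsCompleteFanData d v) {i c : ZMod d} {z : ℤ × ℤ}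
    (hi : detZ (v i) (v (i + 2)) ≤ 0) (hc₀ : c ≠ i) (hc₁ : c ≠ i + 1)
    (hz : InOpenCone (v c) (v (c + 1)) z) : detZ (v i) z < 0 ∧ detZ z (v (i + 2)) < 0 := by
  have e : i + 1 + 1 = i + 2 := by ring
  have h₁ := hv.one_le_detZ (i + 1)
  rw [e] at h₁
  have hz' : ¬ (0 ≤ detZ (v i) z ∨ 0 ≤ detZ z (v (i + 2))) := fun hx =>
    (toR2_mem_coneOf_union (by linarith [hv.one_le_detZ i]) (by linarith) hi hx).elim
      (fun h => hc₀ (hv.eq_of_inOpenCone_of_mem_coneOf hz h))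
      (fun h => hc₁ (hv.eq_of_inOpenCone_of_mem_coneOf hz (by rwa [e])))
  exact (not_or.mp hz').imp not_le.mp not_le.mp

end IsCompleteFanData

section deleteAt

variable {d : ℕ}

def deleteIdx (k : ZMod d) (i : ZMod (d - 1)) : ZMod d := k + 1 + (i.val : ZMod d)

lemma deleteAt_apply (v : ZMod d → ℤ × ℤ) (k : ZMod d) (i : ZMod (d - 1)) :
    deleteAt v k i = v (deleteIdx k i) :=
  rfl

lemma deleteIdx_natCast (k : ZMod d) {n : ℕ} (hn : n < d - 1) : deleteIdx k n = k + 1 + n := by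
  simp [deleteIdx, ZMod.val_cast_of_lt hn]

lemma deleteIdx_zero (k : ZMod d) : deleteIdx k 0 = k + 1 := by
  simp [deleteIdx]

lemma deleteIdx_neg_one (hd : 2 ≤ d) (k : ZMod d) : deleteIdx k (-1) = k - 1 := by
  have : NeZero (d - 1) := ⟨by omega⟩
  have hcast : ((d - 1 - 1 : ℕ) : ZMod d) = -2 := by
    rw [Nat.sub_sub, Nat.cast_sub (by omega), ZMod.natCast_self]; norm_num
  rw [deleteIdx, ZMod.val_neg_one_of_neZero, hcast]; ring

lemma deleteIdx_injective (hd : 2 ≤ d) (k : ZMod d) : Function.Injective (deleteIdx k) := by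
  have : NeZero (d - 1) := ⟨by omega⟩
  intro i j hij
  have hval : (i.val : ZMod d) = j.val := add_left_cancel hij
  rw [ZMod.natCast_eq_natCast_iff', Nat.mod_eq_of_lt (by have := i.val_lt; omega),
    Nat.mod_eq_of_lt (by have := j.val_lt; omega)] at hval
  exact ZMod.val_injective _ hval

lemma deleteIdx_ne (hd : 2 ≤ d) (k : ZMod d) (i : ZMod (d - 1)) : deleteIdx k i ≠ k := by
  have : NeZero (d - 1) := ⟨by omega⟩
  intro h
  rw [deleteIdx] at h
  have hzero : ((i.val + 1 : ℕ) : ZMod d) = 0 := by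
    push_cast; linear_combination h
  have := Nat.le_of_dvd (by omega) ((ZMod.natCast_eq_zero_iff _ _).mp hzero)
  have := i.val_lt
  omega

lemma exists_deleteIdx_eq (hd : 2 ≤ d) (k : ZMod d) {m : ZMod d} (hm : m ≠ k) :
    ∃ i, deleteIdx k i = m := by
  have : NeZero d := ⟨by omega⟩
  have hcast : ((m - (k + 1)).val : ZMod d) = m - (k + 1) := ZMod.natCast_zmod_val _
  have hlt : (m - (k + 1)).val < d - 1 := by
    have hne : (m - (k + 1)).val ≠ d - 1 := by
      intro h
      rw [h, Nat.cast_sub (by omega), ZMod.natCast_self] at hcast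
      exact hm (by linear_combination -hcast)
    have := (m - (k + 1)).val_lt
    omega
  exact ⟨_, by rw [deleteIdx_natCast k hlt, hcast]; ring⟩

lemma deleteIdx_add_one (hd : 3 ≤ d) (k : ZMod d) {i : ZMod (d - 1)} (hi : i ≠ -1) :
    deleteIdx k (i + 1) = deleteIdx k i + 1 := by
  have : Fact (1 < d - 1) := ⟨by omega⟩
  have hval : (i + 1).val = i.val + 1 := by
    have hne : i.val ≠ d - 1 - 1 := fun h =>
      hi (ZMod.val_injective _ (by rw [h, ZMod.val_neg_one_of_neZero]))
    have := i.val_lt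
    rw [ZMod.val_add_of_lt, ZMod.val_one]
    rw [ZMod.val_one]; omega
  rw [deleteIdx, deleteIdx, hval]; push_cast; ring

lemma deleteIdx_sub_one (hd : 3 ≤ d) (k : ZMod d) {i : ZMod (d - 1)} (hi : i ≠ 0) :
    deleteIdx k (i - 1) = deleteIdx k i - 1 := by
  have h := deleteIdx_add_one hd k (i := i - 1) (by contrapose! hi; linear_combination hi)
  rw [sub_add_cancel] at h
  rw [h, add_sub_cancel_right]

end deleteAt

section Blowdown

variable {d : ℕ} {v : ZMod d → ℤ × ℤ} {k : ZMod d}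

lemma coneOf_deleteAt_of_ne (hd : 3 ≤ d) {i : ZMod (d - 1)} (hi : i ≠ -1) :
    coneOf (deleteAt v k i) (deleteAt v k (i + 1)) =
      coneOf (v (deleteIdx k i)) (v (deleteIdx k i + 1)) := by
  rw [deleteAt_apply, deleteAt_apply, deleteIdx_add_one hd k hi]

lemma coneOf_deleteAt_neg_one (hd : 2 ≤ d) :
    coneOf (deleteAt v k (-1)) (deleteAt v k (-1 + 1)) = coneOf (v (k - 1)) (v (k + 1)) := by
  rw [neg_add_cancel, deleteAt_apply, deleteAt_apply, deleteIdx_neg_one hd, deleteIdx_zero]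

namespace IsCompleteFanData

/-- `cone(v_{k-1}, v_{k+1}) = σ_{k-1} ∪ σ_k` because `v_k = v_{k-1} + v_{k+1}`. -/
lemma notMem_coneOf_of_mem_interior (hv : IsCompleteFanData d v)
    (hk : v k = v (k - 1) + v (k + 1)) (hd : 3 ≤ d) {i : ZMod (d - 1)} (hi : i ≠ -1) {x : ℝ × ℝ}
    (hx : x ∈ interior (coneOf (v (deleteIdx k i)) (v (deleteIdx k i + 1)))) :
    x ∉ coneOf (v (k - 1)) (v (k + 1)) := by
  intro hx'
  rcases coneOf_subset_union _ _ hx' with hx' | hx'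
  · replace hx' : x ∈ coneOf (v (k - 1)) (v (k - 1 + 1)) := by rwa [sub_add_cancel, hk]
    exact hi (deleteIdx_injective (by omega) k
      ((hv.eq_of_mem_interior_coneOf hx hx').trans (deleteIdx_neg_one (by omega) k).symm))
  · rw [← hk] at hx'
    exact deleteIdx_ne (by omega) k i (hv.eq_of_mem_interior_coneOf hx hx')

lemma one_le_detZ_deleteAt (hv : IsCompleteFanData d v) (hk : v k = v (k - 1) + v (k + 1))
    (hd : 3 ≤ d) (i : ZMod (d - 1)) :
    1 ≤ detZ (deleteAt v k i) (deleteAt v k (i + 1)) := by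
  by_cases hi : i = -1
  · subst hi
    have h := hv.one_le_detZ (k - 1)
    rw [sub_add_cancel, hk, detZ_add_right, detZ_self, zero_add] at h
    rwa [neg_add_cancel, deleteAt_apply, deleteAt_apply, deleteIdx_neg_one (by omega),
      deleteIdx_zero]
  · rw [deleteAt_apply, deleteAt_apply, deleteIdx_add_one hd k hi]
    exact hv.one_le_detZ _

lemma iUnion_coneOf_deleteAt (hv : IsCompleteFanData d v) (hk : v k = v (k - 1) + v (k + 1))
    (hd : 3 ≤ d) : (⋃ i, coneOf (deleteAt v k i) (deleteAt v k (i + 1))) = Set.univ := by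
  refine Set.eq_univ_of_forall fun x => ?_
  obtain ⟨m, hm⟩ := Set.mem_iUnion.mp (hv.iUnion_coneOf ▸ Set.mem_univ x)
  have hmerged : x ∈ coneOf (v (k - 1)) (v (k + 1)) → x ∈ ⋃ i, coneOf (deleteAt v k i)
      (deleteAt v k (i + 1)) := fun hx =>
    Set.mem_iUnion.mpr ⟨-1, by rwa [coneOf_deleteAt_neg_one (by omega)]⟩
  by_cases hm₁ : m = k - 1
  · subst hm₁
    rw [sub_add_cancel, hk] at hm
    exact hmerged (coneOf_add_right_subset _ _ hm)
  by_cases hm₂ : m = k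
  · subst hm₂
    rw [hk] at hm
    exact hmerged (coneOf_add_left_subset _ _ hm)
  obtain ⟨i, rfl⟩ := exists_deleteIdx_eq (by omega) k hm₂
  have hi : i ≠ -1 := by rintro rfl; exact hm₁ (deleteIdx_neg_one (by omega) k)
  exact Set.mem_iUnion.mpr ⟨i, by rwa [coneOf_deleteAt_of_ne hd hi]⟩

lemma disjoint_interior_deleteAt (hv : IsCompleteFanData d v)
    (hk : v k = v (k - 1) + v (k + 1)) (hd : 3 ≤ d) {i j : ZMod (d - 1)} (hij : i ≠ j) :
    interior (coneOf (deleteAt v k i) (deleteAt v k (i + 1))) ∩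
      interior (coneOf (deleteAt v k j) (deleteAt v k (j + 1))) = ∅ := by
  have hmerged {i : ZMod (d - 1)} (hi : i ≠ -1) :
      interior (coneOf (deleteAt v k i) (deleteAt v k (i + 1))) ∩
        interior (coneOf (deleteAt v k (-1)) (deleteAt v k (-1 + 1))) = ∅ := by
    rw [coneOf_deleteAt_of_ne hd hi, coneOf_deleteAt_neg_one (by omega)]
    exact Set.eq_empty_of_forall_notMem fun x hx =>
      hv.notMem_coneOf_of_mem_interior hk hd hi hx.1 (interior_subset hx.2)
  by_cases hi : i = -1
  · subst hi; rw [Set.inter_comm]; exact hmerged (Ne.symm hij)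
  by_cases hj : j = -1
  · subst hj; exact hmerged hi
  rw [coneOf_deleteAt_of_ne hd hi, coneOf_deleteAt_of_ne hd hj]
  exact hv.disjoint_interior ((deleteIdx_injective (by omega) k).ne hij)

lemma deleteAt (hv : IsCompleteFanData d v) (hk : v k = v (k - 1) + v (k + 1)) (hd : 4 ≤ d) :
    IsCompleteFanData (d - 1) (deleteAt v k) :=
  ⟨by omega, fun i => hv.gcd_eq_one _, one_le_detZ_deleteAt hv hk (by omega),
    iUnion_coneOf_deleteAt hv hk (by omega),
    fun _ _ hij => disjoint_interior_deleteAt hv hk (by omega) hij⟩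

end IsCompleteFanData

lemma one_le_fanF_deleteAt (hv : IsLDPFanData d v) (hk : v k = v (k - 1) + v (k + 1))
    (hd : 4 ≤ d) (i : ZMod (d - 1)) : 1 ≤ fanF (d - 1) (deleteAt v k) i := by
  have : Fact (1 < d - 1) := ⟨by omega⟩
  have hneg : (-1 : ZMod (d - 1)) ≠ 0 := neg_ne_zero.mpr one_ne_zero
  simp only [fanF, deleteAt_apply]
  by_cases hi₀ : i = 0
  · subst hi₀
    have h₁ : deleteIdx k 1 = k + 1 + 1 := by
      rw [← zero_add 1, deleteIdx_add_one (by omega) k hneg.symm, deleteIdx_zero]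
    rw [zero_sub, zero_add, deleteIdx_neg_one (by omega), h₁, deleteIdx_zero]
    have hf := hv.2 (k + 1)
    have hdet := hv.1.one_le_detZ (k + 1)
    simp only [fanF, add_sub_cancel_right, hk, detZ_add_left, detZ_add_right, detZ_self] at hf
    linarith [detZ_swap (v (k + 1)) (v (k + 1 + 1))]
  by_cases hi₁ : i = -1
  · subst hi₁
    rw [deleteIdx_sub_one (by omega) k hneg, neg_add_cancel, deleteIdx_neg_one (by omega),
      deleteIdx_zero]
    have hf := hv.2 (k - 1)
    have hdet := hv.1.one_le_detZ (k - 1 - 1)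
    simp only [fanF, sub_add_cancel, hk, detZ_add_left, detZ_add_right, detZ_self] at hf hdet
    linarith [detZ_swap (v (k - 1)) (v (k - 1 - 1))]
  rw [deleteIdx_sub_one (by omega) k hi₀, deleteIdx_add_one (by omega) k hi₁]
  exact hv.2 _

lemma IsLDPFanData.deleteAt (hv : IsLDPFanData d v) (hk : v k = v (k - 1) + v (k + 1))
    (hd : 4 ≤ d) : IsLDPFanData (d - 1) (deleteAt v k) :=
  ⟨hv.1.deleteAt hk hd, one_le_fanF_deleteAt hv hk hd⟩

end Blowdown

section Triangle

variable {a b c : ℤ × ℤ}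

lemma detZ_nonpos_of_detZ_eq_one (hab : detZ a b = 1) (hbc : detZ b c = 1)
    (hf : 1 ≤ detZ a b + detZ b c + detZ c a) (hb : b ≠ a + c) : detZ a c ≤ 0 := by
  have hca := detZ_swap a c
  by_contra! hac
  have hc : c = (-1 : ℤ) • a + (1 : ℤ) • b := by
    rw [eq_detZ_smul_add_detZ_smul hab c, detZ_swap, hbc]
    congr 2; linarith
  exact hb (by rw [hc]; module)

lemma one_le_detZ_sub_left (hab : detZ a b = 1) (hbc : 0 < detZ b c) (hc : Int.gcd c.1 c.2 = 1)
    (hf : 1 ≤ detZ a b + detZ b c + detZ c a) (hb : b ≠ a + c) : 1 ≤ detZ (b - a) c := by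
  have hca := detZ_swap a c
  have hsub : detZ (b - a) c = detZ b c + detZ c a := by rw [detZ_sub_left]; linarith
  by_contra! hlt
  have hzero : detZ (b - a) c = 0 := by omega
  have hcba : c = b - a :=
    eq_of_detZ_eq_zero (u := a) (by rw [detZ_sub_right, hab, detZ_self, sub_zero]) hzero
      (by linarith) hc
  exact hb (by rw [hcba]; abel)

lemma one_le_detZ_sub_right (hbc : detZ b c = 1) (hab : 0 < detZ a b) (ha : Int.gcd a.1 a.2 = 1)
    (hf : 1 ≤ detZ a b + detZ b c + detZ c a) (hb : b ≠ a + c) : 1 ≤ detZ a (b - c) := by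
  have hca := detZ_swap a c
  have hsub : detZ a (b - c) = detZ a b + detZ c a := by rw [detZ_sub_right]; linarith
  by_contra! hlt
  have hzero : detZ (b - c) a = 0 := by rw [detZ_swap]; omega
  have habc : a = b - c :=
    eq_of_detZ_eq_zero (u := -c)
      (by rw [detZ_neg_left, detZ_sub_right, detZ_self, detZ_swap b c, hbc]; ring) hzero
      (by rw [detZ_neg_left]; linarith) ha
  exact hb (by rw [habc]; abel)

end Triangle

def NoSumOfNeighbours {d : ℕ} (v : ZMod d → ℤ × ℤ) : Prop :=
  ∀ k, v k ≠ v (k - 1) + v (k + 1)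

namespace IsLDPFanData

variable {d : ℕ} {v : ZMod d → ℤ × ℤ}

lemma detZ_nonpos (hv : IsLDPFanData d v) (hns : NoSumOfNeighbours v) {k : ZMod d}
    (h₁ : detZ (v k) (v (k + 1)) = 1) (h₂ : detZ (v (k + 1)) (v (k + 2)) = 1) :
    detZ (v k) (v (k + 2)) ≤ 0 := by
  have e : k + 1 + 1 = k + 2 := by ring
  have hf := hv.2 (k + 1)
  have hk := hns (k + 1)
  rw [fanF, add_sub_cancel_right, e] at hf
  rw [add_sub_cancel_right, e] at hk
  exact detZ_nonpos_of_detZ_eq_one h₁ h₂ hf hk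

lemma inOpenCone_succ_sub (hv : IsLDPFanData d v) (hns : NoSumOfNeighbours v) {j : ZMod d}
    (hj : detZ (v j) (v (j + 1)) = 1) :
    InOpenCone (v (j + 1)) (v (j + 1 + 1)) (v (j + 1) - v j) := by
  have hf := hv.2 (j + 1)
  have hk := hns (j + 1)
  rw [fanF, add_sub_cancel_right] at hf
  rw [add_sub_cancel_right] at hk
  refine ⟨by rw [detZ_sub_right, detZ_self, detZ_swap (v j), hj]; norm_num, ?_⟩
  linarith [one_le_detZ_sub_left hj (by linarith [hv.1.one_le_detZ (j + 1)])
    (hv.1.gcd_eq_one _) hf hk]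

lemma inOpenCone_pred_sub (hv : IsLDPFanData d v) (hns : NoSumOfNeighbours v) {j : ZMod d}
    (hj : detZ (v j) (v (j + 1)) = 1) :
    InOpenCone (v (j - 1)) (v (j - 1 + 1)) (v j - v (j + 1)) := by
  have hdet := hv.1.one_le_detZ (j - 1)
  rw [sub_add_cancel] at hdet ⊢
  refine ⟨?_, by rw [detZ_sub_left, detZ_self, detZ_swap (v j), hj]; norm_num⟩
  linarith [one_le_detZ_sub_right hj (by linarith) (hv.1.gcd_eq_one _) (hv.2 j) (hns j)]

lemma two_le_detZ_of_detZ_nonpos (hv : IsLDPFanData d v) (hns : NoSumOfNeighbours v)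
    {i j : ZMod d} (hi : detZ (v i) (v (i + 2)) ≤ 0)
    (hj₁ : j ≠ i - 1) (hj₂ : j ≠ i) (hj₃ : j ≠ i + 1) (hj₄ : j ≠ i + 2) :
    2 ≤ detZ (v j) (v (j + 1)) := by
  by_contra! hlt
  have hj : detZ (v j) (v (j + 1)) = 1 := le_antisymm (by omega) (hv.1.one_le_detZ j)
  have hfwd := hv.1.detZ_neg_of_inOpenCone hi (fun h => hj₁ (by linear_combination h))
    (fun h => hj₂ (by linear_combination h)) (hv.inOpenCone_succ_sub hns hj)
  have hbwd := hv.1.detZ_neg_of_inOpenCone hi (fun h => hj₃ (by linear_combination h))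
    (fun h => hj₄ (by linear_combination h)) (hv.inOpenCone_pred_sub hns hj)
  linarith [hfwd.1, hbwd.1, detZ_sub_right (v i) (v (j + 1)) (v j),
    detZ_sub_right (v i) (v j) (v (j + 1))]

/-- In the basis `(a, b) = (v_{k+1}, v_{k+2})` one has `v_k = -p a - b` and `v_{k+3} = -a - q b`
with `p, q ≥ 0`. The interior points `v_{k+3} - v_{k+2}` of `σ_{k+3}` and `v_k - v_{k+1}` of
`σ_{k-1}` avoid the half-planes covered by `σ_k ∪ σ_{k+1}` and `σ_{k+1} ∪ σ_{k+2}`, that is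
`p (q + 1) < 1` and `(p + 1) q < 1`. -/
lemma neg_eq_of_three (hv : IsLDPFanData d v) (hns : NoSumOfNeighbours v) (hd : 4 ≤ d)
    {k : ZMod d} (h₁ : detZ (v k) (v (k + 1)) = 1) (h₂ : detZ (v (k + 1)) (v (k + 2)) = 1)
    (h₃ : detZ (v (k + 2)) (v (k + 3)) = 1) : v k = -v (k + 2) ∧ v (k + 3) = -v (k + 1) := by
  have two_ne : (2 : ZMod d) ≠ 0 := by exact_mod_cast ZMod.natCast_ne_zero_of_lt two_pos (by omega)
  have three_ne : (3 : ZMod d) ≠ 0 := by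
    exact_mod_cast ZMod.natCast_ne_zero_of_lt three_pos (by omega)
  have e : k + 1 + 2 = k + 3 := by ring
  have hturn₀ := hv.detZ_nonpos hns h₁ h₂
  have hturn₁ := hv.detZ_nonpos hns (k := k + 1) (by rwa [show k + 1 + 1 = k + 2 by ring])
    (by rwa [show k + 1 + 1 = k + 2 by ring, e])
  have hlt₁ := (hv.1.detZ_neg_of_inOpenCone hturn₀ (c := k + 2 + 1)
    (fun h => three_ne (by linear_combination h)) (fun h => two_ne (by linear_combination h))
    (hv.inOpenCone_succ_sub hns (by rwa [show k + 2 + 1 = k + 3 by ring]))).1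
  have hlt₂ := (hv.1.detZ_neg_of_inOpenCone hturn₁ (c := k - 1)
    (fun h => two_ne (by linear_combination -h)) (fun h => three_ne (by linear_combination -h))
    (hv.inOpenCone_pred_sub hns h₁)).2
  rw [show k + 2 + 1 = k + 3 by ring] at hlt₁
  rw [e] at hlt₂ hturn₁
  set a := v (k + 1)
  set b := v (k + 2)
  have hc := eq_detZ_smul_add_detZ_smul h₂ (v k)
  have he := eq_detZ_smul_add_detZ_smul h₂ (v (k + 3))
  rw [detZ_swap (v k), h₁] at hc
  rw [detZ_swap b, h₃] at he
  rw [hc, he] at hlt₁ hlt₂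
  have hba : detZ b a = -1 := by rw [detZ_swap, h₂]
  simp only [detZ_add_left, detZ_add_right, detZ_sub_left, detZ_sub_right, detZ_smul_left,
    detZ_smul_right, detZ_self, h₂, hba] at hlt₁ hlt₂
  have hp : detZ (v k) b = 0 := by nlinarith
  have hq : detZ a (v (k + 3)) = 0 := by nlinarith
  constructor
  · rw [hc, hp]; module
  · rw [he, hq]; module

/-- Both `v_k - v_{k+1}` and `v_{k+3} - v_{k+2}` equal `-v_{k+1} - v_{k+2}`; as interior points of
`σ_{k-1}` and `σ_{k+3}` this forces `k - 1 = k + 3`, so `d = 4`. -/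
lemma detZ_eq_one_of_three (hv : IsLDPFanData d v) (hns : NoSumOfNeighbours v) (hd : 4 ≤ d)
    {k : ZMod d} (h₁ : detZ (v k) (v (k + 1)) = 1) (h₂ : detZ (v (k + 1)) (v (k + 2)) = 1)
    (h₃ : detZ (v (k + 2)) (v (k + 3)) = 1) (s : ZMod d) : detZ (v s) (v (s + 1)) = 1 := by
  obtain ⟨hc, he⟩ := hv.neg_eq_of_three hns hd h₁ h₂ h₃
  have e : k + 2 + 1 = k + 3 := by ring
  have hz : v (k + 2 + 1) - v (k + 2) = v k - v (k + 1) := by rw [e, hc, he]; abel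
  have hz' := hv.inOpenCone_pred_sub hns h₁
  have h₄ : (4 : ZMod d) = 0 := by
    have := hv.1.eq_of_inOpenCone_of_mem_coneOf (hv.inOpenCone_succ_sub hns (by rwa [e]))
      (hz ▸ toR2_mem_coneOf (by linarith [hv.1.one_le_detZ (k - 1)]) hz'.2.le hz'.1.le)
    linear_combination this
  rcases ZMod.eq_or_eq_add_of_four_eq_zero h₄ s k with rfl | rfl | rfl | rfl
  · exact h₁
  · rwa [show k + 1 + 1 = k + 2 by ring]
  · rwa [e]
  · rw [show k + 3 + 1 = k by linear_combination h₄, he, hc, detZ_neg_left, detZ_neg_right,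
      neg_neg, h₂]

end IsLDPFanData

/-- Lemma 3.2: let `v` be singular LDP fan data that cannot be obtained by blowing up
LDP fan data at a nonsingular cone (i.e. no deletion of a vector `v_k = v_{k−1} + v_{k+1}`
yields LDP fan data).  If two consecutive cones `σ_i`, `σ_{i+1}` are nonsingular,
then every other cone is singular. -/
theorem two_consecutive_nonsingular_rest_singular (d : ℕ) (v : ZMod d → ℤ × ℤ)
    (h : IsLDPFanData d v)
    (hsing : ∃ i : ZMod d, 2 ≤ detZ (v i) (v (i + 1)))
    (hnb : ∀ k : ZMod d, 4 ≤ d → v k = v (k - 1) + v (k + 1) →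
      ¬ IsLDPFanData (d - 1) (deleteAt v k))
    (i : ZMod d)
    (h1 : detZ (v i) (v (i + 1)) = 1)
    (h2 : detZ (v (i + 1)) (v (i + 2)) = 1) :
    ∀ j : ZMod d, j ≠ i → j ≠ i + 1 → 2 ≤ detZ (v j) (v (j + 1)) := by
  intro j hj₀ hj₁
  obtain ⟨s, hs⟩ := hsing
  rcases lt_or_ge d 4 with hd | hd
  · obtain rfl : d = 3 := le_antisymm (by omega) h.1.1
    have hcases : ∀ x y : ZMod 3, x = y ∨ x = y + 1 ∨ x = y + 2 := by decide
    rcases hcases s i with rfl | rfl | rfl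
    · omega
    · rw [show i + 1 + 1 = i + 2 by ring] at hs; omega
    · rcases hcases j i with rfl | rfl | rfl <;> trivial
  have hns : NoSumOfNeighbours v := fun k hk => hnb k hd hk (h.deleteAt hk hd)
  have hsing (k : ZMod d) (h₁ : detZ (v k) (v (k + 1)) = 1)
      (h₂ : detZ (v (k + 1)) (v (k + 2)) = 1) (h₃ : detZ (v (k + 2)) (v (k + 3)) = 1) : False := by
    have := h.detZ_eq_one_of_three hns hd h₁ h₂ h₃ s
    omega
  by_contra! hlt
  have hj : detZ (v j) (v (j + 1)) = 1 := le_antisymm (by omega) (h.1.one_le_detZ j)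
  by_cases hj₂ : j = i + 2
  · subst hj₂
    exact hsing i h1 h2 (by rwa [show i + 2 + 1 = i + 3 by ring] at hj)
  by_cases hj₃ : j = i - 1
  · subst hj₃
    exact hsing (i - 1) hj (by rwa [sub_add_cancel, show i - 1 + 2 = i + 1 by ring])
      (by rwa [show i - 1 + 2 = i + 1 by ring, show i - 1 + 3 = i + 2 by ring])
  have := h.two_le_detZ_of_detZ_nonpos hns (h.detZ_nonpos hns h1 h2) hj₃ hj₀ hj₁ hj₂
  omega
end

section
/- There is no LDP fan data v_1, …, v_5 of length 5 satisfying det(v_1, v_2) ≥ 2, det(v_2, v_3) = 1, det(v_3, v_4) ≥ 2, det(v_4, v_5) = 1, and det(v_5, v_1) ≥ 2. In other words, there is no toric log del Pezzo surface of Picard number three whose singular points are exactly the torus-fixed points of σ_1, σ_3 and σ_5. -/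
/-!
The smooth cones `σ₁` and `σ₃` make `(v₁, v₂)` and `(v₃, v₄)` lattice bases, so by the Plücker
relations every determinant `det(vᵢ, vⱼ)` is an integer polynomial in a few of them. Convexity of
the polygon at `v₁, …, v₄` (`f ≥ 1`) and the fact that the ray `v₂` does not lie inside `σ₄` then
force `det(v₀, v₃) = -det(v₄, v₀)`. Expanding `v₀` in the basis `(v₃, v₄)` gives
`v₀ = det(v₄, v₀) • (v₄ - v₃)`, which is not primitive since `det(v₄, v₀) ≥ 2`.
-/

lemma detZ_swap_s13 (u w : ℤ × ℤ) : detZ w u = -detZ u w := by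
  simp only [detZ]; ring

lemma detZ_mul_detZ (u w x y : ℤ × ℤ) :
    detZ u w * detZ x y = detZ u x * detZ w y - detZ u y * detZ w x := by
  simp only [detZ]; ring

lemma detZ_smul_eq (u w z : ℤ × ℤ) : detZ u w • z = detZ z w • u + detZ u z • w := by
  ext <;> simp only [detZ, Prod.smul_fst, Prod.smul_snd, Prod.fst_add, Prod.snd_add,
    smul_eq_mul] <;> ring

lemma isUnit_of_eq_smul {z w : ℤ × ℤ} {k : ℤ} (hz : Int.gcd z.1 z.2 = 1) (h : z = k • w) :
    IsUnit k :=
  (Int.isCoprime_iff_gcd_eq_one.2 hz).isUnit_of_dvd' ⟨w.1, by rw [h]; rfl⟩ ⟨w.2, by rw [h]; rfl⟩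

lemma toR2_mem_interior_coneOf {u w x : ℤ × ℤ} (huw : 0 < detZ u w) (hux : 0 < detZ u x)
    (hxw : 0 < detZ x w) : toR2 x ∈ interior (coneOf u w) := by
  set D : ℝ := (detZ u w : ℝ)
  have hD : 0 < D := Int.cast_pos.2 huw
  let U : Set (ℝ × ℝ) := {z | 0 < u.1 * z.2 - u.2 * z.1} ∩ {z | 0 < z.1 * w.2 - z.2 * w.1}
  have hU : IsOpen U :=
    (isOpen_lt continuous_const (by fun_prop)).inter (isOpen_lt continuous_const (by fun_prop))
  -- Cramer's rule gives the coefficients of `z` in the basis `(u, w)`.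
  have hUcone : U ⊆ coneOf u w := by
    rintro z ⟨h₁, h₂⟩
    refine ⟨(z.1 * w.2 - z.2 * w.1) / D, (u.1 * z.2 - u.2 * z.1) / D,
      (div_pos h₂ hD).le, (div_pos h₁ hD).le, ?_⟩
    have hD' : D = u.1 * w.2 - u.2 * w.1 := by push_cast [D, detZ]; rfl
    ext <;> simp only [toR2, Prod.fst_add, Prod.snd_add, Prod.smul_fst, Prod.smul_snd,
      smul_eq_mul] <;> field_simp <;> rw [hD'] <;> ring
  refine interior_maximal hUcone hU ⟨?_, ?_⟩
  · have : (0 : ℝ) < detZ u x := Int.cast_pos.2 hux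
    push_cast [detZ] at this; exact this
  · have : (0 : ℝ) < detZ x w := Int.cast_pos.2 hxw
    push_cast [detZ] at this; exact this

lemma interior_coneOf_inter_nonempty {u w x y : ℤ × ℤ} (huw : 0 < detZ u w)
    (hux : 0 < detZ u x) (hxw : 0 < detZ x w) (hxy : 0 < detZ x y) :
    (interior (coneOf u w) ∩ interior (coneOf x y)).Nonempty := by
  -- For large `N`, the point `N • x + y` lies in both cones, close to the ray through `x`.
  set N : ℤ := 1 + |detZ u y| + |detZ y w|
  have hN : 0 < N := by positivity
  have hlin : ∀ a b : ℤ × ℤ, detZ a (N • x + b) = N * detZ a x + detZ a b ∧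
      detZ (N • x + b) a = N * detZ x a + detZ b a := by
    intro a b; constructor <;> simp only [detZ, Prod.smul_fst, Prod.smul_snd, Prod.fst_add,
      Prod.snd_add, smul_eq_mul] <;> ring
  refine ⟨toR2 (N • x + y), toR2_mem_interior_coneOf huw ?_ ?_,
    toR2_mem_interior_coneOf hxy ?_ ?_⟩
  · rw [(hlin u y).1]; nlinarith [neg_abs_le (detZ u y), abs_nonneg (detZ y w)]
  · rw [(hlin w y).2]; nlinarith [neg_abs_le (detZ y w), abs_nonneg (detZ u y)]
  · rw [(hlin x y).1, show detZ x x = 0 by simp only [detZ]; ring]; simpa using hxy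
  · rw [(hlin y y).2, show detZ y y = 0 by simp only [detZ]; ring]; simpa using mul_pos hN hxy

lemma IsCompleteFanData.detZ_nonpos_or_detZ_nonpos {d : ℕ} {v : ZMod d → ℤ × ℤ}
    (hv : IsCompleteFanData d v) {i j : ZMod d} (hij : i ≠ j) :
    detZ (v i) (v j) ≤ 0 ∨ detZ (v j) (v (i + 1)) ≤ 0 := by
  by_contra! h
  obtain ⟨-, -, hpos, -, hdisj⟩ := hv
  simpa [hdisj i j hij] using interior_coneOf_inter_nonempty (hpos i) h.1 h.2 (hpos j)

lemma IsLDPFanData.detZ_lt {d : ℕ} {v : ZMod d → ℤ × ℤ} (hv : IsLDPFanData d v) (i : ZMod d) :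
    detZ (v (i - 1)) (v (i + 1)) < detZ (v (i - 1)) (v i) + detZ (v i) (v (i + 1)) := by
  have := hv.2 i
  rw [fanF, detZ_swap_s13 (v (i - 1)) (v (i + 1))] at this
  omega

lemma eq_neg_of_alternating_pentagon {a b c p q r s t : ℤ} (hqr : q * r - b * t = 1)
    (hqa : a = c * q + s * t) (hp : p = b * c + r * s) (ha : 0 < a) (hb : 2 ≤ b) (hc : 0 < c)
    (hpa : p ≤ a) (hqb : q ≤ b) (hrb : r ≤ b) (hsc : -c ≤ s) (hrp : 0 ≤ r ∨ 0 ≤ p) :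
    s = -c := by
  have ht : 0 ≤ t := by
    by_contra! ht
    rcases lt_or_gt_of_ne (show r ≠ 0 by rintro rfl; nlinarith) with hr | hr
    · have hrt : 0 < r - t := by
        nlinarith [mul_nonpos_of_nonpos_of_nonneg ht.le (sub_nonneg.2 hpa)]
      nlinarith [mul_nonneg_of_nonpos_of_nonpos hr.le (sub_nonpos.2 hqb)]
    · have hq : q < 0 := by nlinarith
      have hqt : 0 < q - t := by
        nlinarith [mul_nonpos_of_nonpos_of_nonneg ht.le (neg_le_iff_add_nonneg.1 hsc)]
      nlinarith [mul_nonneg_of_nonpos_of_nonpos hq.le (sub_nonpos.2 hrb)]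
  have hr : 0 < r := by
    rcases hrp with hr | hp0
    · rcases hr.lt_or_eq with hr | rfl
      · exact hr
      · nlinarith
    · by_contra! hr
      nlinarith [mul_nonneg hp0 ht]
  have hq : 0 < q := by nlinarith
  have hrt : 0 < r - t := by nlinarith [mul_nonneg (sub_nonneg.2 hqb) ht]
  have hqt : 0 < q - t := by nlinarith [mul_nonneg (sub_nonneg.2 hrb) ht]
  -- `a - p = -c (b - q) - s (r - t)`
  have hbq : b - q ≤ r - t := by nlinarith [mul_nonneg (neg_le_iff_add_nonneg.1 hsc) hrt.le]
  -- `(q - t) (r - t) = 1 + t (b - q - (r - t)) ≤ 1`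
  have hqt1 : q - t = 1 := by nlinarith [mul_nonneg ht (sub_nonneg.2 hbq)]
  have hrt1 : r - t = 1 := by nlinarith [mul_nonneg ht (sub_nonneg.2 hbq)]
  have hbq1 : 1 ≤ b - q := by nlinarith
  nlinarith

lemma eq_smul_sub_of_alternating_pentagon {x₀ x₁ x₂ x₃ x₄ : ℤ × ℤ}
    (h₁₂ : detZ x₁ x₂ = 1) (h₃₄ : detZ x₃ x₄ = 1)
    (h₀₁ : 0 < detZ x₀ x₁) (h₂₃ : 2 ≤ detZ x₂ x₃) (h₄₀ : 0 < detZ x₄ x₀)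
    (f₁ : detZ x₀ x₂ < detZ x₀ x₁ + detZ x₁ x₂) (f₂ : detZ x₁ x₃ < detZ x₁ x₂ + detZ x₂ x₃)
    (f₃ : detZ x₂ x₄ < detZ x₂ x₃ + detZ x₃ x₄) (f₄ : detZ x₃ x₀ < detZ x₃ x₄ + detZ x₄ x₀)
    (hfan : detZ x₄ x₂ ≤ 0 ∨ detZ x₂ x₀ ≤ 0) :
    x₀ = detZ x₄ x₀ • (x₄ - x₃) := by
  have pl₁ := detZ_mul_detZ x₁ x₂ x₃ x₄
  have pl₂ := detZ_mul_detZ x₀ x₁ x₃ x₄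
  have pl₃ := detZ_mul_detZ x₀ x₂ x₃ x₄
  have hx₀ := detZ_smul_eq x₃ x₄ x₀
  rw [detZ_swap_s13 x₀ x₃] at f₄ hx₀
  rw [detZ_swap_s13 x₂ x₄, detZ_swap_s13 x₀ x₂] at hfan
  rw [detZ_swap_s13 x₄ x₀] at pl₂ pl₃ hx₀
  rw [h₁₂, h₃₄] at *
  set a := detZ x₀ x₁
  set b := detZ x₂ x₃
  set c := detZ x₄ x₀
  set p := detZ x₀ x₂
  set q := detZ x₁ x₃
  set r := detZ x₂ x₄
  set s := detZ x₀ x₃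
  set t := detZ x₁ x₄
  have hqr : q * r - b * t = 1 := by linear_combination -pl₁
  have hqa : a = c * q + s * t := by linear_combination pl₂
  have hp : p = b * c + r * s := by linear_combination pl₃
  have hs : s = -c := eq_neg_of_alternating_pentagon hqr hqa hp h₀₁ h₂₃ h₄₀
    (by omega) (by omega) (by omega) (by omega) (by omega)
  rw [one_smul, hs] at hx₀
  exact hx₀.trans (by module)

/-- Lemma 4.1: there is no LDP fan data of length 5 whose singular cones are exactly
`σ_1`, `σ_3`, `σ_5` (indexed here as `σ_0`, `σ_2`, `σ_4`). -/
theorem no_alternating_singular_pentagon :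
    ¬ ∃ v : ZMod 5 → ℤ × ℤ, IsLDPFanData 5 v ∧
      2 ≤ detZ (v 0) (v 1) ∧
      detZ (v 1) (v 2) = 1 ∧
      2 ≤ detZ (v 2) (v 3) ∧
      detZ (v 3) (v 4) = 1 ∧
      2 ≤ detZ (v 4) (v 0) := by
  rintro ⟨v, hv, h₀₁, h₁₂, h₂₃, h₃₄, h₄₀⟩
  have hv₀ : v 0 = detZ (v 4) (v 0) • (v 4 - v 3) :=
    eq_smul_sub_of_alternating_pentagon h₁₂ h₃₄ (by omega) h₂₃ (by omega)
      (hv.detZ_lt 1) (hv.detZ_lt 2) (hv.detZ_lt 3) (hv.detZ_lt 4)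
      (hv.1.detZ_nonpos_or_detZ_nonpos (i := 4) (j := 2) (by decide))
  rcases Int.isUnit_iff.1 (isUnit_of_eq_smul (hv.1.2.1 0) hv₀) with h | h <;> omega
end

section
/- Let p, q, r, s, t be integers with gcd(q, r) = gcd(s, t) = 1, and suppose the cyclic sequence v_1 = (1,0), v_2 = (0,1), v_3 = (−1,p+1), v_4 = (−1,p), v_5 = (q,r), v_6 = (s,t) is LDP fan data (of length 6) with q ≥ 0, rs ≤ qt − 2, and t ≤ −2. Then s ≥ 1, and one has det(v_6, v_1) + det(v_1, v_1+v_2) + det(v_1+v_2, v_6) = 1 − s ≤ 0, det(v_2+v_3, v_3) + det(v_3, v_4) + det(v_4, v_2+v_3) = 0, and det(v_2, v_3) + det(v_3, v_3+v_4) + det(v_3+v_4, v_2) = 0. Consequently, inserting v_1+v_2 between v_1 and v_2, or v_2+v_3 between v_2 and v_3, or v_3+v_4 between v_3 and v_4, always produces fan data of length 7 that is not LDP fan data; that is, the blow-up of X(Δ) at any of its nonsingular torus-fixed points is not log del Pezzo. -/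
/-- The data `(1,0), (0,1), (−1,p+1), (−1,p), (q,r), (s,t)`. -/
def data6 (p q r s t : ℤ) : ZMod 6 → ℤ × ℤ := fun i =>
  if i = 0 then (1, 0) else if i = 1 then (0, 1) else if i = 2 then (-1, p + 1)
  else if i = 3 then (-1, p) else if i = 4 then (q, r) else (s, t)

lemma IsCompleteFanData.false_of_strictly_inside_two_cones {d : ℕ} {v : ZMod d → ℤ × ℤ}
    (hv : IsCompleteFanData d v) {i j : ZMod d} (hij : i ≠ j) (x : ℤ × ℤ)
    (hi₁ : 0 < detZ (v i) x) (hi₂ : 0 < detZ x (v (i + 1)))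
    (hj₁ : 0 < detZ (v j) x) (hj₂ : 0 < detZ x (v (j + 1))) : False :=
  (hv.2.2.2.2 i j hij).subset
    ⟨toR2_mem_interior_coneOf (hv.2.2.1 i) hi₁ hi₂, toR2_mem_interior_coneOf (hv.2.2.1 j) hj₁ hj₂⟩

lemma not_isLDPFanData_of_fanF_nonpos {d : ℕ} {v : ZMod d → ℤ × ℤ} {i : ZMod d}
    (hi : fanF d v i ≤ 0) : ¬ IsLDPFanData d v :=
  fun hv => (hv.2 i).not_gt (hi.trans_lt one_pos)

section insertAt

variable {d : ℕ} (v : ZMod d → ℤ × ℤ) (k : ZMod d)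

lemma insertAt_natCast_of_le [NeZero d] {i : ℕ} (hi : i ≤ k.val) :
    insertAt v k (i : ZMod (d + 1)) = v i := by
  have : i < d + 1 := by have := k.val_lt; omega
  simp [insertAt, ZMod.val_natCast_of_lt this, hi]

lemma insertAt_natCast_val_add_one [NeZero d] :
    insertAt v k ((k.val + 1 : ℕ) : ZMod (d + 1)) = v k + v (k + 1) := by
  have : k.val + 1 < d + 1 := by have := k.val_lt; omega
  unfold insertAt
  rw [ZMod.val_natCast_of_lt this]
  simp

lemma insertAt_natCast_of_lt [NeZero d] {i : ℕ} (hki : k.val + 1 < i) (hid : i ≤ k.val + d + 1) :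
    insertAt v k (i : ZMod (d + 1)) = v ((i - 1 : ℕ) : ZMod d) := by
  rcases le_or_gt i d with hid' | hdi
  · unfold insertAt
    rw [ZMod.val_natCast_of_lt (by omega), if_neg (by omega), if_neg (by omega)]
  · obtain ⟨j, rfl⟩ : ∃ j, i = j + (d + 1) := ⟨i - (d + 1), by omega⟩
    have hj : (((j + (d + 1) : ℕ)) : ZMod (d + 1)) = j := by simp
    have hj' : (((j + (d + 1) - 1 : ℕ)) : ZMod d) = j := by
      rw [show j + (d + 1) - 1 = j + d by omega]; simp
    rw [hj, hj', insertAt_natCast_of_le]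
    omega

theorem fanF_insertAt_val (hd : 2 ≤ d) :
    fanF (d + 1) (insertAt v k) (k.val : ZMod (d + 1)) =
      detZ (v (k - 1)) (v k) + detZ (v k) (v k + v (k + 1)) +
        detZ (v k + v (k + 1)) (v (k - 1)) := by
  have : NeZero d := ⟨by omega⟩
  have hprev : (k.val : ZMod (d + 1)) - 1 = ((k.val + d : ℕ) : ZMod (d + 1)) := by
    have := ZMod.natCast_self (d + 1)
    push_cast at this ⊢
    linear_combination -this
  have hprev' : ((k.val + d - 1 : ℕ) : ZMod d) = k - 1 := by
    rw [Nat.cast_sub (by omega)]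
    simp
  unfold fanF
  rw [hprev, insertAt_natCast_of_lt v k (by omega) (by omega), hprev',
    insertAt_natCast_of_le v k le_rfl, ZMod.natCast_zmod_val, ← Nat.cast_succ,
    insertAt_natCast_val_add_one]

theorem fanF_insertAt_val_add_two (hd : 2 ≤ d) :
    fanF (d + 1) (insertAt v k) ((k.val + 2 : ℕ) : ZMod (d + 1)) =
      detZ (v k + v (k + 1)) (v (k + 1)) + detZ (v (k + 1)) (v (k + 2)) +
        detZ (v (k + 2)) (v k + v (k + 1)) := by
  have : NeZero d := ⟨by omega⟩
  unfold fanF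
  rw [show ((k.val + 2 : ℕ) : ZMod (d + 1)) - 1 = ((k.val + 1 : ℕ) : ZMod (d + 1)) by
      push_cast; ring,
    show ((k.val + 2 : ℕ) : ZMod (d + 1)) + 1 = ((k.val + 3 : ℕ) : ZMod (d + 1)) by
      push_cast; ring,
    insertAt_natCast_val_add_one, insertAt_natCast_of_lt v k (by omega) (by omega),
    insertAt_natCast_of_lt v k (by omega) (by omega)]
  simp [add_assoc]

end insertAt

lemma one_le_of_isCompleteFanData_data6 {p q r s t : ℤ}
    (h : IsCompleteFanData 6 (data6 p q r s t))
    (hq : 0 ≤ q) (hrs : r * s ≤ q * t - 2) (ht : t ≤ -2) : 1 ≤ s := by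
  by_contra! hs
  have hdet₄ : 1 ≤ -r - p * q := by simpa +decide [data6, detZ] using h.2.2.1 3
  have hr : 1 ≤ r := by nlinarith
  have hq₁ : 1 ≤ q := by
    by_contra! hq₀
    obtain rfl : q = 0 := by omega
    omega
  exact h.false_of_strictly_inside_two_cones (i := 0) (j := 4) (by decide) (q, r + 1)
    (by simp +decide [data6, detZ]; omega) (by simp +decide [data6, detZ]; omega)
    (by simp +decide [data6, detZ]; nlinarith) (by simp +decide [data6, detZ]; nlinarith)

theorem hexagon_blowups_not_ldp_general (p q r s t : ℤ)
    (h : IsLDPFanData 6 (data6 p q r s t))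
    (hq : 0 ≤ q) (hrs : r * s ≤ q * t - 2) (ht : t ≤ -2) :
    (1 : ℤ) ≤ s ∧
    (detZ (data6 p q r s t 5) (data6 p q r s t 0) +
      detZ (data6 p q r s t 0) (data6 p q r s t 0 + data6 p q r s t 1) +
      detZ (data6 p q r s t 0 + data6 p q r s t 1) (data6 p q r s t 5) = 1 - s ∧
      1 - s ≤ 0) ∧
    (detZ (data6 p q r s t 1 + data6 p q r s t 2) (data6 p q r s t 2) +
      detZ (data6 p q r s t 2) (data6 p q r s t 3) +
      detZ (data6 p q r s t 3) (data6 p q r s t 1 + data6 p q r s t 2) = 0) ∧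
    (detZ (data6 p q r s t 1) (data6 p q r s t 2) +
      detZ (data6 p q r s t 2) (data6 p q r s t 2 + data6 p q r s t 3) +
      detZ (data6 p q r s t 2 + data6 p q r s t 3) (data6 p q r s t 1) = 0) ∧
    ¬ IsLDPFanData 7 (insertAt (data6 p q r s t) 0) ∧
    ¬ IsLDPFanData 7 (insertAt (data6 p q r s t) 1) ∧
    ¬ IsLDPFanData 7 (insertAt (data6 p q r s t) 2) := by
  have hs := one_le_of_isCompleteFanData_data6 h.1 hq hrs ht
  refine ⟨hs, ⟨by simp +decide [data6, detZ]; ring, by omega⟩, by simp +decide [data6, detZ]; ring,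
    by simp +decide [data6, detZ]; ring, ?_, ?_, ?_⟩
  · exact not_isLDPFanData_of_fanF_nonpos ((fanF_insertAt_val _ (0 : ZMod 6) (by norm_num)).trans_le
      (by simp +decide [data6, detZ]; omega))
  · exact not_isLDPFanData_of_fanF_nonpos
      ((fanF_insertAt_val_add_two _ (1 : ZMod 6) (by norm_num)).trans_le
        (by simp +decide [data6, detZ]; omega))
  · exact not_isLDPFanData_of_fanF_nonpos ((fanF_insertAt_val _ (2 : ZMod 6) (by norm_num)).trans_le
      (by simp +decide [data6, detZ]; omega))

/-- No blow-up of the hexagonal LDP fan data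
`(1,0), (0,1), (−1,p+1), (−1,p), (q,r), (s,t)` (with `q ≥ 0`, `rs ≤ qt − 2`, `t ≤ −2`)
at a nonsingular torus-fixed point is log del Pezzo. -/
theorem hexagon_blowups_not_ldp (p q r s t : ℤ)
    (hqr : Int.gcd q r = 1) (hst : Int.gcd s t = 1)
    (h : IsLDPFanData 6 (data6 p q r s t))
    (hq : 0 ≤ q) (hrs : r * s ≤ q * t - 2) (ht : t ≤ -2) :
    (1 : ℤ) ≤ s ∧
    (detZ (data6 p q r s t 5) (data6 p q r s t 0) +
      detZ (data6 p q r s t 0) (data6 p q r s t 0 + data6 p q r s t 1) +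
      detZ (data6 p q r s t 0 + data6 p q r s t 1) (data6 p q r s t 5) = 1 - s ∧
      1 - s ≤ 0) ∧
    (detZ (data6 p q r s t 1 + data6 p q r s t 2) (data6 p q r s t 2) +
      detZ (data6 p q r s t 2) (data6 p q r s t 3) +
      detZ (data6 p q r s t 3) (data6 p q r s t 1 + data6 p q r s t 2) = 0) ∧
    (detZ (data6 p q r s t 1) (data6 p q r s t 2) +
      detZ (data6 p q r s t 2) (data6 p q r s t 2 + data6 p q r s t 3) +
      detZ (data6 p q r s t 2 + data6 p q r s t 3) (data6 p q r s t 1) = 0) ∧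
    ¬ IsLDPFanData 7 (insertAt (data6 p q r s t) 0) ∧
    ¬ IsLDPFanData 7 (insertAt (data6 p q r s t) 1) ∧
    ¬ IsLDPFanData 7 (insertAt (data6 p q r s t) 2) :=
  hexagon_blowups_not_ldp_general p q r s t h hq hrs ht
end
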